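/- (Theorem 2, global attractivity, return-map form.) Under Assumption 1 and with θ̂ > 0, let v* > 0 be the unique fixed point of the half-return map P. Then for every v > 0, the iterates converge to the fixed point: lim_{n→∞} Pⁿ(v) = v*. This expresses the attractivity, with basin ℝ² \ {0}, of the unique nontrivial hybrid periodic orbit of the reset mass–spring–damper hybrid system. -/

import Mathlib

/-- The system matrix `A = ![![0, 1], ![-k/m, -c/m]]`. -/
noncomputable def Amat (m c k : ℝ) : Matrix (Fin 2) (Fin 2) ℝ :=
  ![![0, 1], ![-k/m, -c/m]]

/-- The flow map `x ↦ exp(t A) x` (matrix exponential). -/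
noncomputable def flow (m c k : ℝ) (t : ℝ) (x : Fin 2 → ℝ) : Fin 2 → ℝ :=
  (NormedSpace.exp (t • Amat m c k)).mulVec x

/-- The total mechanical energy `E(x) = (1/2)·m·x₂² + (1/2)·k·x₁²`. -/
noncomputable def energy (m k : ℝ) (x : Fin 2 → ℝ) : ℝ :=
  (1 / 2) * m * (x 1) ^ 2 + (1 / 2) * k * (x 0) ^ 2

/-- `τ` is the first-hitting-time map of the jump set `D = {x : x₁ = 0}`:
for every `x ≠ 0`, `τ x` is the least `t > 0` with `(exp(t A) x)₁ = 0`. -/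
def IsFirstHittingTime (m c k : ℝ) (τ : (Fin 2 → ℝ) → ℝ) : Prop :=
  ∀ x : Fin 2 → ℝ, x ≠ 0 → IsLeast {t : ℝ | 0 < t ∧ flow m c k t x 0 = 0} (τ x)

/-- The half-return map `P(v) = −(exp(τ((θ̂, v)) A) · (θ̂, v))₂`. -/
noncomputable def halfReturn (m c k θ : ℝ) (τ : (Fin 2 → ℝ) → ℝ) (v : ℝ) : ℝ :=
  -(flow m c k (τ ![θ, v]) ![θ, v] 1)

/-- The dissipated energy `Diss(v) = E((θ̂, v)) − E(exp(τ((θ̂, v)) A)·(θ̂, v))`. -/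
noncomputable def diss (m c k θ : ℝ) (τ : (Fin 2 → ℝ) → ℝ) (v : ℝ) : ℝ :=
  energy m k ![θ, v] - energy m k (flow m c k (τ ![θ, v]) ![θ, v])

attribute [local instance] Matrix.linftyOpNormedRing Matrix.linftyOpNormedAlgebra

noncomputable def entryVec (x : Fin 2 → ℝ) (i : Fin 2) :
    Matrix (Fin 2) (Fin 2) ℝ →ₗ[ℝ] ℝ where
  toFun M := M.mulVec x i
  map_add' M N := by simp [Matrix.add_mulVec]
  map_smul' r M := by simp [Matrix.smul_mulVec]

open NormedSpace in
theorem flow_hasDerivAt (m c k : ℝ) (x : Fin 2 → ℝ) (i : Fin 2) (t : ℝ) :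
    HasDerivAt (fun t : ℝ => flow m c k t x i) (((Amat m c k).mulVec (flow m c k t x)) i) t := by
  have h1 : HasDerivAt (fun u : ℝ => exp (u • Amat m c k))
      (Amat m c k * exp (t • Amat m c k)) t := hasDerivAt_exp_smul_const' _ _
  have h2 := ((entryVec x i).toContinuousLinearMap.hasFDerivAt).comp_hasDerivAt t h1
  have h3 : HasDerivAt (fun t : ℝ => flow m c k t x i)
      ((Amat m c k * exp (t • Amat m c k)).mulVec x i) t := h2
  rw [← Matrix.mulVec_mulVec] at h3
  exact h3

theorem flow_zero (m c k : ℝ) (x : Fin 2 → ℝ) : flow m c k 0 x = x := by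
  simp [flow]

theorem flow_add (m c k : ℝ) (s t : ℝ) (x : Fin 2 → ℝ) :
    flow m c k (s + t) x = flow m c k s (flow m c k t x) := by
  unfold flow
  rw [add_smul, Matrix.exp_add_of_commute, Matrix.mulVec_mulVec]
  exact (Commute.refl (Amat m c k)).smul_left _ |>.smul_right _

theorem flow_deriv0 (m c k : ℝ) (x : Fin 2 → ℝ) (t : ℝ) :
    HasDerivAt (fun t : ℝ => flow m c k t x 0) (flow m c k t x 1) t := by
  have h := flow_hasDerivAt m c k x 0 t
  have : (Amat m c k).mulVec (flow m c k t x) 0 = flow m c k t x 1 := by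
    simp [Amat, Matrix.mulVec, dotProduct, Fin.sum_univ_two]
  rwa [this] at h

theorem flow_deriv1 (m c k : ℝ) (x : Fin 2 → ℝ) (t : ℝ) :
    HasDerivAt (fun t : ℝ => flow m c k t x 1)
      (-(k/m) * flow m c k t x 0 - (c/m) * flow m c k t x 1) t := by
  have h := flow_hasDerivAt m c k x 1 t
  have : (Amat m c k).mulVec (flow m c k t x) 1
      = -(k/m) * flow m c k t x 0 - (c/m) * flow m c k t x 1 := by
    simp [Amat, Matrix.mulVec, dotProduct, Fin.sum_univ_two]; ring
  rwa [this] at h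

theorem flow_cont (m c k : ℝ) (x : Fin 2 → ℝ) (i : Fin 2) :
    Continuous (fun t : ℝ => flow m c k t x i) := by
  rw [continuous_iff_continuousAt]
  exact fun t => (flow_hasDerivAt m c k x i t).continuousAt

theorem flow_smul (m c k a t : ℝ) (x : Fin 2 → ℝ) :
    flow m c k t (a • x) = a • flow m c k t x := by
  unfold flow
  rw [Matrix.mulVec_smul]

theorem flow_vec_add (m c k t : ℝ) (x y : Fin 2 → ℝ) :
    flow m c k t (x + y) = flow m c k t x + flow m c k t y := by
  unfold flow
  rw [Matrix.mulVec_add]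

theorem flow_inj (m c k t : ℝ) (x : Fin 2 → ℝ) (h : flow m c k t x = 0) : x = 0 := by
  have h2 := congrArg (flow m c k (-t)) h
  rw [← flow_add, neg_add_cancel, flow_zero] at h2
  rw [h2]
  have h3 : (0 : Fin 2 → ℝ) = (0:ℝ) • (0 : Fin 2 → ℝ) := by simp
  rw [h3, flow_smul]; simp

/-- `g(t)`, the first component of the solution from `(0,1)`. -/
noncomputable def gg (m c k t : ℝ) : ℝ := flow m c k t ![0,1] 0
/-- `ẏ(t)`, the second component of the solution from `(0,1)`. -/
noncomputable def hhf (m c k t : ℝ) : ℝ := flow m c k t ![0,1] 1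

theorem gg_zero (m c k : ℝ) : gg m c k 0 = 0 := by simp [gg, flow_zero]
theorem hhf_zero (m c k : ℝ) : hhf m c k 0 = 1 := by simp [hhf, flow_zero]

theorem gg_deriv (m c k t : ℝ) : HasDerivAt (gg m c k) (hhf m c k t) t :=
  flow_deriv0 m c k ![0,1] t

theorem hhf_deriv (m c k t : ℝ) :
    HasDerivAt (hhf m c k) (-(k/m) * gg m c k t - (c/m) * hhf m c k t) t :=
  flow_deriv1 m c k ![0,1] t

theorem gg_cont (m c k : ℝ) : Continuous (gg m c k) := flow_cont m c k ![0,1] 0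
theorem hhf_cont (m c k : ℝ) : Continuous (hhf m c k) := flow_cont m c k ![0,1] 1

/-- derivative of `s ↦ g(-s)` -/
theorem ggneg_deriv (m c k s : ℝ) :
    HasDerivAt (fun s : ℝ => gg m c k (-s)) (-(hhf m c k (-s))) s := by
  have h := (gg_deriv m c k (-s)).comp s (hasDerivAt_neg s)
  simpa [Function.comp_def, mul_comm] using h

theorem hhfneg_deriv (m c k s : ℝ) :
    HasDerivAt (fun s : ℝ => hhf m c k (-s))
      ((k/m) * gg m c k (-s) + (c/m) * hhf m c k (-s)) s := by
  have h := (hhf_deriv m c k (-s)).comp s (hasDerivAt_neg s)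
  have h2 : HasDerivAt (fun s : ℝ => hhf m c k (-s))
      ((-(k/m) * gg m c k (-(s)) - (c/m) * hhf m c k (-(s))) * (-1)) s := h
  have e : (-(k/m) * gg m c k (-s) - (c/m) * hhf m c k (-s)) * (-1)
      = (k/m) * gg m c k (-s) + (c/m) * hhf m c k (-s) := by ring
  rwa [e] at h2

open Filter Set

/-- IVT sign propagation. -/
theorem pos_between {f : ℝ → ℝ} (hf : Continuous f) {t₀ s : ℝ} (h₀ : 0 < f t₀)
    (hts : t₀ ≤ s) (hnz : ∀ r, t₀ ≤ r → r ≤ s → f r ≠ 0) : 0 < f s := by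
  rcases lt_trichotomy (f s) 0 with h | h | h
  · exfalso
    have : (0:ℝ) ∈ Ioo (f s) (f t₀) := ⟨h, h₀⟩
    have := intermediate_value_Ioo' hts hf.continuousOn this
    obtain ⟨r, hr, hr0⟩ := this
    exact hnz r hr.1.le hr.2.le hr0
  · exact absurd h (hnz s hts le_rfl)
  · exact h

theorem eventually_slope {f : ℝ → ℝ} {a d : ℝ} (hf : HasDerivAt f d a) :
    Tendsto (fun s => (f s - f a) / (s - a)) (nhdsWithin a {a}ᶜ) (nhds d) := by
  have := hasDerivAt_iff_tendsto_slope.mp hf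
  simpa [slope_fun_def_field, div_eq_inv_mul] using this

/-- If `f a ≤ f s` just to the left of `a`, the derivative at `a` is `≤ 0`. -/
theorem deriv_nonpos_left {f : ℝ → ℝ} {a d b : ℝ} (hf : HasDerivAt f d a) (hb : b < a)
    (h : ∀ s, b < s → s < a → f a ≤ f s) : d ≤ 0 := by
  have h1 : Tendsto (fun s => (f s - f a) / (s - a)) (nhdsWithin a (Iio a)) (nhds d) :=
    (eventually_slope hf).mono_left (nhdsWithin_mono a (fun x hx => ne_of_lt hx))
  refine le_of_tendsto h1 ?_
  filter_upwards [Ioo_mem_nhdsLT_of_mem ⟨hb, le_rfl⟩] with s hs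
  exact div_nonpos_of_nonneg_of_nonpos (by linarith [h s hs.1 hs.2]) (by linarith [hs.2])

/-- If `f s ≤ f a` just to the left of `a`, the derivative at `a` is `≥ 0`. -/
theorem deriv_nonneg_left {f : ℝ → ℝ} {a d b : ℝ} (hf : HasDerivAt f d a) (hb : b < a)
    (h : ∀ s, b < s → s < a → f s ≤ f a) : 0 ≤ d := by
  have h1 : Tendsto (fun s => (f s - f a) / (s - a)) (nhdsWithin a (Iio a)) (nhds d) :=
    (eventually_slope hf).mono_left (nhdsWithin_mono a (fun x hx => ne_of_lt hx))
  refine ge_of_tendsto h1 ?_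
  filter_upwards [Ioo_mem_nhdsLT_of_mem ⟨hb, le_rfl⟩] with s hs
  exact div_nonneg_of_nonpos (by linarith [h s hs.1 hs.2]) (by linarith [hs.2])

/-- If `f a = 0` and `f' a > 0` then `f > 0` shortly to the right. -/
theorem pos_right_of_deriv_pos {f : ℝ → ℝ} {a d : ℝ} (hf : HasDerivAt f d a) (h0 : f a = 0)
    (hd : 0 < d) : ∀ᶠ s in nhdsWithin a (Ioi a), 0 < f s := by
  have h1 : Tendsto (fun s => (f s - f a) / (s - a)) (nhdsWithin a (Ioi a)) (nhds d) :=
    (eventually_slope hf).mono_left (nhdsWithin_mono a (fun x hx => ne_of_gt hx))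
  have h2 : ∀ᶠ s in nhdsWithin a (Ioi a), 0 < (f s - f a) / (s - a) :=
    h1.eventually (eventually_gt_nhds hd)
  filter_upwards [h2, self_mem_nhdsWithin] with s hs hs'
  rw [h0, sub_zero] at hs
  have : 0 < s - a := by simpa using (sub_pos.mpr (show a < s from hs'))
  have := (div_pos_iff.mp hs)
  rcases this with ⟨h1', _⟩ | ⟨_, h2'⟩
  · linarith
  · linarith

/-- If `f a = 0` and `f' a < 0` then `f < 0` shortly to the right. -/
theorem neg_right_of_deriv_neg {f : ℝ → ℝ} {a d : ℝ} (hf : HasDerivAt f d a) (h0 : f a = 0)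
    (hd : d < 0) : ∀ᶠ s in nhdsWithin a (Ioi a), f s < 0 := by
  have := pos_right_of_deriv_pos (f := fun s => -f s) (hf.neg) (by simp [h0]) (by linarith)
  filter_upwards [this] with s hs
  linarith [hs]

section Tfacts
open Filter Set

variable {m c k T : ℝ}

theorem g_pos (hT0 : 0 < T) (hTmin : ∀ t, 0 < t → gg m c k t = 0 → T ≤ t) :
    ∀ s, 0 < s → s < T → 0 < gg m c k s := by
  intro s hs hsT
  have hd : HasDerivAt (gg m c k) 1 0 := by
    have := gg_deriv m c k 0; rwa [hhf_zero] at this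
  have hev := pos_right_of_deriv_pos hd (gg_zero m c k) one_pos
  have hmem : Ioo (0:ℝ) s ∈ nhdsWithin (0:ℝ) (Ioi 0) := Ioo_mem_nhdsGT_of_mem ⟨le_rfl, hs⟩
  obtain ⟨t₀, ht₀pos, ht₀mem⟩ := (hev.and (eventually_of_mem hmem (fun x hx => hx))).exists
  refine pos_between (gg_cont m c k) ht₀pos ht₀mem.2.le ?_
  intro r hr1 hr2 hr0
  have : T ≤ r := hTmin r (lt_of_lt_of_le ht₀mem.1 hr1) hr0
  exact absurd (lt_of_le_of_lt hr2 hsT) (not_lt.mpr this)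

theorem mu_neg (hT0 : 0 < T) (hgT : gg m c k T = 0)
    (hTmin : ∀ t, 0 < t → gg m c k t = 0 → T ≤ t) : hhf m c k T < 0 := by
  have gp := g_pos hT0 hTmin
  have hle : hhf m c k T ≤ 0 := by
    refine deriv_nonpos_left (gg_deriv m c k T) (half_lt_self hT0) ?_
    intro s hs1 hs2
    rw [hgT]
    exact (gp s (lt_trans (half_pos hT0) hs1) hs2).le
  rcases lt_or_eq_of_le hle with h | h
  · exact h
  · exfalso
    have hz : flow m c k T ![0,1] = 0 := by
      funext i
      fin_cases i
      · exact hgT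
      · show flow m c k T ![0,1] 1 = 0
        exact h
    have := flow_inj m c k T ![0,1] hz
    have := congrFun this 1
    simp at this
end Tfacts

section Wronski
variable {m c k T : ℝ}

theorem fT_neg (hgT : gg m c k T = 0) (hmu : hhf m c k T < 0) :
    flow m c k T ![1,0] 0 < 0 := by
  set W : ℝ → ℝ := fun t =>
    flow m c k t ![1,0] 0 * hhf m c k t - flow m c k t ![1,0] 1 * gg m c k t with hWdef
  have hW : ∀ t, HasDerivAt W (-(c/m) * W t) t := by
    intro t
    have h1 := (flow_deriv0 m c k ![1,0] t).mul (hhf_deriv m c k t)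
    have h2 := (flow_deriv1 m c k ![1,0] t).mul (gg_deriv m c k t)
    have h3 := h1.sub h2
    refine h3.congr_deriv ?_
    symm
    show -(c/m) * W t = _
    rw [hWdef]
    show -(c / m) * (flow m c k t ![1, 0] 0 * hhf m c k t
      - flow m c k t ![1, 0] 1 * gg m c k t) = _
    unfold gg hhf
    ring
  set Φ : ℝ → ℝ := fun t => W t * Real.exp ((c/m) * t) with hΦdef
  have hΦ : ∀ t, HasDerivAt Φ 0 t := by
    intro t
    have he : HasDerivAt (fun t : ℝ => Real.exp ((c/m) * t))
        (Real.exp ((c/m) * t) * ((c/m) * 1)) t := ((hasDerivAt_id t).const_mul (c/m)).exp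
    have h4 := (hW t).mul he
    refine h4.congr_deriv ?_
    ring
  have hconst : Φ T = Φ 0 :=
    is_const_of_deriv_eq_zero (fun t => (hΦ t).differentiableAt) (fun t => (hΦ t).deriv) T 0
  have hΦ0 : Φ 0 = 1 := by
    rw [hΦdef]
    show W 0 * Real.exp ((c/m) * 0) = 1
    have w1 : flow m c k 0 ![1,0] 0 = 1 := by rw [flow_zero]; rfl
    have w2 : flow m c k 0 ![1,0] 1 = 0 := by rw [flow_zero]; rfl
    rw [hWdef]
    show (flow m c k 0 ![1, 0] 0 * hhf m c k 0
      - flow m c k 0 ![1, 0] 1 * gg m c k 0) * Real.exp ((c/m) * 0) = 1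
    rw [w1, w2, gg_zero, hhf_zero]
    simp
  have hWT : 0 < W T := by
    have h5 : W T * Real.exp ((c/m) * T) = 1 := by rw [← hΦ0, ← hconst]
    by_contra hcon
    push_neg at hcon
    nlinarith [Real.exp_pos ((c/m) * T), mul_nonneg (neg_nonneg.mpr hcon) (Real.exp_pos ((c/m) * T)).le]
  have h6 : W T = flow m c k T ![1,0] 0 * hhf m c k T := by
    rw [hWdef]
    show flow m c k T ![1, 0] 0 * hhf m c k T - flow m c k T ![1, 0] 1 * gg m c k T = _
    rw [hgT]; ring
  nlinarith [hWT, h6, hmu]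
end Wronski

theorem decomp (m c k t θ' v : ℝ) (i : Fin 2) :
    flow m c k t ![θ', v] i
      = θ' * flow m c k t ![1,0] i + v * flow m c k t ![0,1] i := by
  have hx : (![θ', v] : Fin 2 → ℝ) = θ' • ![1,0] + v • ![0,1] := by
    funext j; fin_cases j <;> simp
  rw [hx, flow_vec_add, flow_smul, flow_smul]
  simp

section Backward
open Filter Set
variable {m c k T : ℝ}

theorem Gneg (hm : 0 < m) (hT0 : 0 < T)
    (hTmin : ∀ t, 0 < t → gg m c k t = 0 → T ≤ t) :
    ∀ s, 0 < s → s < T → gg m c k (-s) < 0 := by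
  have gp := g_pos hT0 hTmin
  have nz : ∀ s, 0 < s → s < T → gg m c k (-s) ≠ 0 := by
    intro s h1 h2 h0
    have hq : flow m c k (-s) ![0,1] = hhf m c k (-s) • ![0,1] := by
      funext j; fin_cases j
      · show gg m c k (-s) = _
        rw [h0]; simp
      · show hhf m c k (-s) = _
        simp
    have he : (![0,1] : Fin 2 → ℝ) = hhf m c k (-s) • flow m c k s ![0,1] := by
      have h3 := flow_add m c k s (-s) ![0,1]
      rw [add_neg_cancel, flow_zero, hq, flow_smul] at h3
      exact h3
    have he0 := congrFun he 0
    have he1 : (0:ℝ) = hhf m c k (-s) * gg m c k s := by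
      simpa [gg] using he0
    have hgs := gp s h1 h2
    have hq0 : hhf m c k (-s) = 0 := by
      rcases mul_eq_zero.mp he1.symm with h | h
      · exact h
      · exact absurd h (ne_of_gt hgs)
    have hz : flow m c k (-s) ![0,1] = 0 := by
      rw [hq, hq0]; simp
    have := flow_inj m c k (-s) ![0,1] hz
    have := congrFun this 1
    simp at this
  intro s hs hsT
  have hd : HasDerivAt (fun s : ℝ => gg m c k (-s)) (-1) 0 := by
    have := ggneg_deriv m c k 0
    rwa [neg_zero, hhf_zero] at this
  have hev := neg_right_of_deriv_neg hd (by simpa using gg_zero m c k) (by norm_num)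
  have hmem : Ioo (0:ℝ) s ∈ nhdsWithin (0:ℝ) (Ioi 0) := Ioo_mem_nhdsGT_of_mem ⟨le_rfl, hs⟩
  obtain ⟨t₀, ht₀neg, ht₀mem⟩ := (hev.and (eventually_of_mem hmem (fun x hx => hx))).exists
  have hposb : 0 < -gg m c k (-s) := by
    have hcont2 : Continuous (fun r : ℝ => -gg m c k (-r)) :=
      ((gg_cont m c k).comp continuous_neg).neg
    refine pos_between (f := fun r : ℝ => -gg m c k (-r)) hcont2 (by show (0:ℝ) < -gg m c k (-t₀); linarith) ht₀mem.2.le ?_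
    intro r hr1 hr2 hr0
    have : gg m c k (-r) = 0 := by simpa [neg_eq_zero] using hr0
    exact nz r (lt_of_lt_of_le ht₀mem.1 hr1) (lt_of_le_of_lt hr2 hsT) this
  linarith

theorem HINV (hm : 0 < m) (hc : 0 < c) (hk : 0 < k) (hT0 : 0 < T)
    (hGneg : ∀ s, 0 < s → s < T → gg m c k (-s) < 0) :
    ∀ s₀ s, 0 < s₀ → hhf m c k (-s₀) < 0 → s₀ ≤ s → s < T → hhf m c k (-s) < 0 := by
  intro s₀ s h0 hH0 hle hsT
  by_contra hcon
  push_neg at hcon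
  set HH : ℝ → ℝ := fun r => hhf m c k (-r) with hHH
  have hcont : Continuous HH := (hhf_cont m c k).comp continuous_neg
  set S : Set ℝ := Icc s₀ s ∩ HH ⁻¹' Ici 0 with hS
  have hSne : S.Nonempty := ⟨s, ⟨hle, le_rfl⟩, hcon⟩
  have hSclosed : IsClosed S := isClosed_Icc.inter (isClosed_Ici.preimage hcont)
  have hSbdd : BddBelow S := ⟨s₀, fun r hr => hr.1.1⟩
  set u := sInf S with hu_def
  have hu : u ∈ S := hSclosed.csInf_mem hSne hSbdd
  have hus : u ≤ s := hu.1.2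
  have hs₀u : s₀ < u := by
    rcases lt_or_eq_of_le hu.1.1 with h | h
    · exact h
    · exfalso
      have : (0:ℝ) ≤ HH s₀ := by rw [h]; exact hu.2
      exact absurd this (not_le.mpr hH0)
  have hlt : ∀ r, s₀ ≤ r → r < u → HH r < 0 := by
    intro r hr1 hr2
    by_contra hc2
    push_neg at hc2
    have hrS : r ∈ S := ⟨⟨hr1, le_trans hr2.le hus⟩, hc2⟩
    exact absurd (csInf_le hSbdd hrS) (not_le.mpr hr2)
  have hHu_le : HH u ≤ 0 := by
    have htd : Tendsto HH (nhdsWithin u (Iio u)) (nhds (HH u)) :=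
      (hcont.tendsto u).mono_left nhdsWithin_le_nhds
    refine le_of_tendsto htd ?_
    filter_upwards [Ioo_mem_nhdsLT_of_mem ⟨hs₀u, le_rfl⟩] with r hr
    exact (hlt r hr.1.le hr.2).le
  have hHu : HH u = 0 := le_antisymm hHu_le hu.2
  have hd := hhfneg_deriv m c k u
  have hGu : gg m c k (-u) < 0 := hGneg u (lt_trans h0 hs₀u) (lt_of_le_of_lt hus hsT)
  have hdneg : (k/m) * gg m c k (-u) + (c/m) * hhf m c k (-u) < 0 := by
    have : hhf m c k (-u) = 0 := hHu
    rw [this]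
    have hkm : 0 < k/m := div_pos hk hm
    nlinarith
  have hge := deriv_nonneg_left hd hs₀u ?_
  · linarith
  · intro r hr1 hr2
    have := hlt r hr1.le hr2
    show HH r ≤ HH u
    rw [hHu]
    exact this.le

theorem Hdec (hm : 0 < m) (hc : 0 < c) (hk : 0 < k) (hT0 : 0 < T)
    (hGneg : ∀ s, 0 < s → s < T → gg m c k (-s) < 0)
    (hHINV : ∀ s₀ s, 0 < s₀ → hhf m c k (-s₀) < 0 → s₀ ≤ s → s < T → hhf m c k (-s) < 0) :
    ∀ s₀ s, 0 < s₀ → hhf m c k (-s₀) < 0 → s₀ < s → s < T →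
      hhf m c k (-s) < hhf m c k (-s₀) := by
  intro s₀ s h0 hH0 hlt hsT
  have hanti : StrictAntiOn (fun r => hhf m c k (-r)) (Icc s₀ s) := by
    refine strictAntiOn_of_deriv_neg (convex_Icc s₀ s)
      (((hhf_cont m c k).comp continuous_neg).continuousOn) ?_
    intro r hr
    rw [interior_Icc] at hr
    rw [(hhfneg_deriv m c k r).deriv]
    have hG : gg m c k (-r) < 0 := hGneg r (lt_trans h0 hr.1) (lt_trans hr.2 hsT)
    have hH : hhf m c k (-r) < 0 :=
      hHINV s₀ r h0 hH0 hr.1.le (lt_trans hr.2 hsT)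
    have h1 : 0 < k/m := div_pos hk hm
    have h2 : 0 < c/m := div_pos hc hm
    nlinarith
  exact hanti ⟨le_rfl, hlt.le⟩ ⟨hlt.le, le_rfl⟩ hlt

theorem Gmono (hm : 0 < m) (hc : 0 < c) (hk : 0 < k) (hT0 : 0 < T)
    (hHINV : ∀ s₀ s, 0 < s₀ → hhf m c k (-s₀) < 0 → s₀ ≤ s → s < T → hhf m c k (-s) < 0) :
    ∀ s₀ s, 0 < s₀ → hhf m c k (-s₀) < 0 → s₀ < s → s < T →
      gg m c k (-s₀) < gg m c k (-s) := by
  intro s₀ s h0 hH0 hlt hsT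
  have hmono : StrictMonoOn (fun r => gg m c k (-r)) (Icc s₀ s) := by
    refine strictMonoOn_of_deriv_pos (convex_Icc s₀ s)
      (((gg_cont m c k).comp continuous_neg).continuousOn) ?_
    intro r hr
    rw [interior_Icc] at hr
    rw [(ggneg_deriv m c k r).deriv]
    have hH : hhf m c k (-r) < 0 :=
      hHINV s₀ r h0 hH0 hr.1.le (lt_trans hr.2 hsT)
    linarith
  exact hmono ⟨le_rfl, hlt.le⟩ ⟨hlt.le, le_rfl⟩ hlt

theorem Mbound (hm : 0 < m) (hT0 : 0 < T)
    (hGneg : ∀ s, 0 < s → s < T → gg m c k (-s) < 0) :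
    ∃ M, 0 < M ∧ ∀ s, 0 ≤ s → s ≤ T → -gg m c k (-s) ≤ M := by
  have hcont : Continuous (fun s : ℝ => -gg m c k (-s)) :=
    ((gg_cont m c k).comp continuous_neg).neg
  obtain ⟨z, hz, hmax⟩ := (isCompact_Icc (a := (0:ℝ)) (b := T)).exists_isMaxOn
    (Set.nonempty_Icc.mpr hT0.le) hcont.continuousOn
  refine ⟨-gg m c k (-z), ?_, fun s h1 h2 => hmax ⟨h1, h2⟩⟩
  have h3 := hGneg (T/2) (half_pos hT0) (half_lt_self hT0)
  have h4 : -gg m c k (-(T/2)) ≤ -gg m c k (-z) :=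
    hmax ⟨(half_pos hT0).le, (half_lt_self hT0).le⟩
  linarith
end Backward


set_option maxHeartbeats 3000000 in
/-- Theorem 2, global attractivity, return-map form: under
Assumption 1 and `θ̂ > 0`, if `v* > 0` is the unique fixed point of `P`, then for
every `v > 0` the iterates `Pⁿ(v)` converge to `v*`.  This expresses the
attractivity, with basin `ℝ² \ {0}`, of the unique nontrivial hybrid periodic
orbit. -/
theorem stmt15 (m c k θ : ℝ) (hm : 0 < m) (hc : 0 < c) (hk : 0 < k)
    (hud : c ^ 2 < 4 * k * m) (hθ : 0 < θ)
    (τ : (Fin 2 → ℝ) → ℝ) (hτ : IsFirstHittingTime m c k τ)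
    (vstar : ℝ) (hv : 0 < vstar) (hfix : halfReturn m c k θ τ vstar = vstar)
    (huniq : ∀ v : ℝ, 0 < v → halfReturn m c k θ τ v = v → v = vstar) :
    ∀ v : ℝ, 0 < v →
      Filter.Tendsto (fun n : ℕ => (halfReturn m c k θ τ)^[n] v)
        Filter.atTop (nhds vstar) := by
  classical
  -- basic facts about the half-period `T`
  have e1ne : (![0,1] : Fin 2 → ℝ) ≠ 0 := by
    intro h; have := congrFun h 1; simp at this
  obtain ⟨⟨hT0, hgT⟩, hTlb⟩ := hτ ![0,1] e1ne
  set T := τ ![0,1] with hTdef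
  have hgT' : gg m c k T = 0 := hgT
  have hTmin : ∀ t, 0 < t → gg m c k t = 0 → T ≤ t := fun t h1 h2 => hTlb ⟨h1, h2⟩
  have gp := g_pos (m := m) (c := c) (k := k) hT0 hTmin
  have hmu : hhf m c k T < 0 := mu_neg hT0 hgT' hTmin
  have hFT : flow m c k T ![1,0] 0 < 0 := fT_neg hgT' hmu
  have hGneg := Gneg (m := m) (c := c) (k := k) hm hT0 hTmin
  have hHINV := HINV (m := m) (c := c) (k := k) hm hc hk hT0 hGneg
  have hHdec := Hdec (m := m) (c := c) (k := k) hm hc hk hT0 hGneg hHINV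
  have hGmono := Gmono (m := m) (c := c) (k := k) hm hc hk hT0 hHINV
  obtain ⟨M, hM, hMb⟩ := Mbound (m := m) (c := c) (k := k) hm hT0 hGneg
  -- the first coordinate is positive before the hitting time
  have posbefore : ∀ x : Fin 2 → ℝ, 0 < x 0 → ∀ s, 0 ≤ s → s < τ x →
      0 < flow m c k s x 0 := by
    intro x hx0 s hs0 hsτ
    have hxne : x ≠ 0 := by intro h; rw [h] at hx0; simp at hx0
    obtain ⟨⟨ht1, ht2⟩, hlb⟩ := hτ x hxne
    have hf0 : flow m c k 0 x 0 = x 0 := by rw [flow_zero]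
    refine pos_between (flow_cont m c k x 0) (t₀ := 0) (by rw [hf0]; exact hx0) hs0 ?_
    intro r hr1 hr2 hr0
    rcases eq_or_lt_of_le hr1 with h | h
    · rw [← h, hf0] at hr0; exact absurd hr0 (ne_of_gt hx0)
    · have := hlb ⟨h, hr0⟩
      linarith
  -- hitting data for initial conditions `(θ, v)`, `v > 0`
  have hits : ∀ v : ℝ, 0 < v → 0 < τ ![θ,v] ∧ τ ![θ,v] < T ∧
      flow m c k (τ ![θ,v]) ![θ,v] 0 = 0 := by
    intro v hv0
    have hxne : (![θ,v] : Fin 2 → ℝ) ≠ 0 := by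
      intro h
      have h0 := congrFun h 0
      simp at h0
      exact absurd h0 (ne_of_gt hθ)
    obtain ⟨⟨ht1, ht2⟩, hlb⟩ := hτ ![θ,v] hxne
    refine ⟨ht1, ?_, ht2⟩
    have hd := decomp m c k T θ v 0
    have hneg : flow m c k T ![θ,v] 0 < 0 := by
      rw [hd]
      have : gg m c k T = flow m c k T ![0,1] 0 := rfl
      rw [← this, hgT']
      nlinarith [mul_pos hθ (neg_pos.mpr hFT)]
    have h0' : flow m c k 0 ![θ,v] 0 = θ := by rw [flow_zero]; simp
    have hIV : (0:ℝ) ∈ Set.Ioo (flow m c k T ![θ,v] 0) (flow m c k 0 ![θ,v] 0) := by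
      constructor
      · exact hneg
      · rw [h0']; exact hθ
    obtain ⟨z, hz, hz0⟩ := intermediate_value_Ioo' hT0.le
      (flow_cont m c k ![θ,v] 0).continuousOn hIV
    have := hlb ⟨hz.1, hz0⟩
    linarith [hz.2]
  -- backward representation
  have backrel : ∀ v : ℝ, 0 < v →
      flow m c k (τ ![θ,v]) ![θ,v] 1 * gg m c k (-τ ![θ,v]) = θ ∧
      flow m c k (τ ![θ,v]) ![θ,v] 1 * hhf m c k (-τ ![θ,v]) = v := by
    intro v hv0
    obtain ⟨h1, h2, h3⟩ := hits v hv0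
    have hq : flow m c k (τ ![θ,v]) ![θ,v]
        = flow m c k (τ ![θ,v]) ![θ,v] 1 • ![0,1] := by
      funext j; fin_cases j
      · show flow m c k (τ ![θ,v]) ![θ,v] 0 = _
        rw [h3]; simp
      · show flow m c k (τ ![θ,v]) ![θ,v] 1 = _
        simp
    have hx : (![θ,v] : Fin 2 → ℝ)
        = flow m c k (τ ![θ,v]) ![θ,v] 1 • flow m c k (-τ ![θ,v]) ![0,1] := by
      have h4 := flow_add m c k (-τ ![θ,v]) (τ ![θ,v]) ![θ,v]
      rw [neg_add_cancel, flow_zero, hq, flow_smul] at h4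
      exact h4
    constructor
    · have h5 := congrFun hx 0
      simp only [Pi.smul_apply, smul_eq_mul] at h5
      have : (![θ,v] : Fin 2 → ℝ) 0 = θ := by simp
      rw [this] at h5
      exact h5.symm
    · have h5 := congrFun hx 1
      simp only [Pi.smul_apply, smul_eq_mul] at h5
      have : (![θ,v] : Fin 2 → ℝ) 1 = v := by simp
      rw [this] at h5
      exact h5.symm
  -- facts about the half-return map
  have wneg : ∀ v : ℝ, 0 < v → flow m c k (τ ![θ,v]) ![θ,v] 1 < 0 := by
    intro v hv0
    obtain ⟨hb1, _⟩ := backrel v hv0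
    have hG := hGneg (τ ![θ,v]) (hits v hv0).1 (hits v hv0).2.1
    nlinarith
  have Ppos : ∀ v : ℝ, 0 < v → 0 < halfReturn m c k θ τ v := by
    intro v hv0
    have := wneg v hv0
    unfold halfReturn
    linarith
  have hPG : ∀ v : ℝ, 0 < v →
      halfReturn m c k θ τ v * (-gg m c k (-τ ![θ,v])) = θ := by
    intro v hv0
    have := (backrel v hv0).1
    unfold halfReturn
    nlinarith [this]
  have hPH : ∀ v : ℝ, 0 < v →
      halfReturn m c k θ τ v * (-hhf m c k (-τ ![θ,v])) = v := by
    intro v hv0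
    have := (backrel v hv0).2
    unfold halfReturn
    nlinarith [this]
  have hHneg : ∀ v : ℝ, 0 < v → hhf m c k (-τ ![θ,v]) < 0 := by
    intro v hv0
    have h1 := hPH v hv0
    have h2 := Ppos v hv0
    nlinarith
  have hPlow : ∀ v : ℝ, 0 < v → θ ≤ halfReturn m c k θ τ v * M := by
    intro v hv0
    have h1 := hPG v hv0
    have h2 := Ppos v hv0
    have h3 := hMb (τ ![θ,v]) (hits v hv0).1.le (hits v hv0).2.1.le
    nlinarith
  -- monotonicity of the hitting time
  have τmono : ∀ v1 v2 : ℝ, 0 < v1 → v1 < v2 → τ ![θ,v1] < τ ![θ,v2] := by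
    intro v1 v2 h1 h12
    obtain ⟨ha1, hb1, hc1⟩ := hits v1 h1
    obtain ⟨ha2, hb2, hc2⟩ := hits v2 (lt_trans h1 h12)
    have hg1 : 0 < gg m c k (τ ![θ,v1]) := gp _ ha1 hb1
    have e1 := decomp m c k (τ ![θ,v1]) θ v2 0
    have e2 := decomp m c k (τ ![θ,v1]) θ v1 0
    rw [hc1] at e2
    have e3 : flow m c k (τ ![θ,v1]) ![θ,v2] 0
        = (v2 - v1) * gg m c k (τ ![θ,v1]) := by
      have : gg m c k (τ ![θ,v1]) = flow m c k (τ ![θ,v1]) ![0,1] 0 := rfl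
      rw [this] at hg1 ⊢
      linarith [e1, e2]
    rcases lt_trichotomy (τ ![θ,v2]) (τ ![θ,v1]) with h | h | h
    · exfalso
      have hg2 : 0 < gg m c k (τ ![θ,v2]) := gp _ ha2 (lt_trans h hb1)
      have e4 := decomp m c k (τ ![θ,v2]) θ v1 0
      have e5 := decomp m c k (τ ![θ,v2]) θ v2 0
      rw [hc2] at e5
      have e6 : flow m c k (τ ![θ,v2]) ![θ,v1] 0
          = -((v2 - v1) * gg m c k (τ ![θ,v2])) := by
        have : gg m c k (τ ![θ,v2]) = flow m c k (τ ![θ,v2]) ![0,1] 0 := rfl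
        rw [this] at hg2 ⊢
        linarith [e4, e5]
      have hpos := posbefore ![θ,v1] (by simp [hθ]) (τ ![θ,v2]) ha2.le h
      nlinarith
    · exfalso
      rw [h] at hc2
      rw [hc2] at e3
      nlinarith
    · exact h
  -- at the fixed point the backward velocity is exactly `-1`
  have hfixH : hhf m c k (-τ ![θ,vstar]) = -1 := by
    have h1 := hPH vstar hv
    rw [hfix] at h1
    have h2 : vstar * (-hhf m c k (-τ ![θ,vstar])) = vstar * 1 := by rw [h1, mul_one]
    have h3 := mul_left_cancel₀ (ne_of_gt hv) h2
    linarith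
  -- sign facts above the fixed point
  have upper : ∀ u : ℝ, vstar < u →
      vstar < halfReturn m c k θ τ u ∧ halfReturn m c k θ τ u < u ∧
      hhf m c k (-τ ![θ,u]) < -1 := by
    intro u hu
    have hu0 : 0 < u := lt_trans hv hu
    have hslt := τmono vstar u hv hu
    have hsv := hits vstar hv
    have hsu := hits u hu0
    have hHu : hhf m c k (-τ ![θ,u]) < -1 := by
      have := hHdec (τ ![θ,vstar]) (τ ![θ,u]) hsv.1 (by rw [hfixH]; norm_num)
        hslt hsu.2.1
      rwa [hfixH] at this
    have hP := Ppos u hu0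
    have h1 := hPH u hu0
    have h2 : halfReturn m c k θ τ u < u := by nlinarith
    have hGm := hGmono (τ ![θ,vstar]) (τ ![θ,u]) hsv.1 (by rw [hfixH]; norm_num)
      hslt hsu.2.1
    have h3 := hPG u hu0
    have h4 := hPG vstar hv
    rw [hfix] at h4
    have hGu := hGneg (τ ![θ,u]) hsu.1 hsu.2.1
    have h5 : vstar < halfReturn m c k θ τ u := by nlinarith
    exact ⟨h5, h2, hHu⟩
  -- sign facts below the fixed point
  have lower : ∀ u : ℝ, 0 < u → u < vstar →
      u < halfReturn m c k θ τ u ∧ halfReturn m c k θ τ u < vstar ∧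
      -1 < hhf m c k (-τ ![θ,u]) := by
    intro u hu0 hu
    have hslt := τmono u vstar hu0 hu
    have hsv := hits vstar hv
    have hsu := hits u hu0
    have hHu0 := hHneg u hu0
    have hHu : -1 < hhf m c k (-τ ![θ,u]) := by
      have := hHdec (τ ![θ,u]) (τ ![θ,vstar]) hsu.1 hHu0 hslt hsv.2.1
      rw [hfixH] at this
      linarith
    have hP := Ppos u hu0
    have h1 := hPH u hu0
    have h2 : u < halfReturn m c k θ τ u := by nlinarith
    have hGm := hGmono (τ ![θ,u]) (τ ![θ,vstar]) hsu.1 hHu0 hslt hsv.2.1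
    have h3 := hPG u hu0
    have h4 := hPG vstar hv
    rw [hfix] at h4
    have hGv := hGneg (τ ![θ,vstar]) hsv.1 hsv.2.1
    have h5 : halfReturn m c k θ τ u < vstar := by nlinarith
    exact ⟨h2, h5, hHu⟩
  -- uniform decrease above the fixed point
  have stepU : ∀ ε : ℝ, 0 < ε → ∃ d : ℝ, 0 < d ∧
      ∀ u, vstar + ε ≤ u → halfReturn m c k θ τ u ≤ u - d := by
    intro ε hε
    have hv₀ : vstar < vstar + ε := by linarith
    obtain ⟨_, _, hH₀⟩ := upper (vstar + ε) hv₀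
    refine ⟨(-(1 + hhf m c k (-τ ![θ,vstar + ε]))) * θ / M,
      div_pos (mul_pos (by linarith) hθ) hM, ?_⟩
    intro u huv
    have hu0 : 0 < u := by linarith
    have hH : hhf m c k (-τ ![θ,u]) ≤ hhf m c k (-τ ![θ,vstar + ε]) := by
      rcases eq_or_lt_of_le huv with h | h
      · rw [h]
      · have hts := τmono (vstar + ε) u (by linarith) h
        exact (hHdec _ _ (hits (vstar + ε) (by linarith)).1 (by linarith)
          hts (hits u hu0).2.1).le
    have h1 := hPH u hu0
    have h2 := Ppos u hu0
    have h3 := hPlow u hu0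
    have h4 : θ/M ≤ halfReturn m c k θ τ u := by
      rw [div_le_iff₀ hM]; linarith
    have h5 : u - halfReturn m c k θ τ u
        ≥ halfReturn m c k θ τ u * (-(1 + hhf m c k (-τ ![θ,vstar + ε]))) := by
      nlinarith
    have h6 : halfReturn m c k θ τ u * (-(1 + hhf m c k (-τ ![θ,vstar + ε])))
        ≥ (θ/M) * (-(1 + hhf m c k (-τ ![θ,vstar + ε]))) := by
      have hδ : 0 < -(1 + hhf m c k (-τ ![θ,vstar + ε])) := by linarith
      nlinarith
    have h7 : (-(1 + hhf m c k (-τ ![θ,vstar + ε]))) * θ / M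
        = (θ/M) * (-(1 + hhf m c k (-τ ![θ,vstar + ε]))) := by ring
    linarith [h5, h6, h7.le, h7.ge]
  -- uniform increase below the fixed point
  have stepL : ∀ ε : ℝ, 0 < ε → ε < vstar → ∃ d : ℝ, 0 < d ∧
      ∀ u, 0 < u → u ≤ vstar - ε → u + d ≤ halfReturn m c k θ τ u := by
    intro ε hε hεv
    have hv₀0 : 0 < vstar - ε := by linarith
    have hv₀ : vstar - ε < vstar := by linarith
    obtain ⟨_, _, hH₀⟩ := lower (vstar - ε) hv₀0 hv₀
    have hδ : 0 < 1 + hhf m c k (-τ ![θ,vstar - ε]) := by linarith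
    refine ⟨(1 + hhf m c k (-τ ![θ,vstar - ε])) * θ / M,
      div_pos (mul_pos (by linarith) hθ) hM, ?_⟩
    intro u hu0 huv
    have hH : hhf m c k (-τ ![θ,vstar - ε]) ≤ hhf m c k (-τ ![θ,u]) := by
      rcases eq_or_lt_of_le huv with h | h
      · rw [h]
      · have hts := τmono u (vstar - ε) hu0 h
        exact (hHdec _ _ (hits u hu0).1 (hHneg u hu0) hts
          (hits (vstar - ε) hv₀0).2.1).le
    have h1 := hPH u hu0
    have h2 := Ppos u hu0
    have h3 := hPlow u hu0
    have h4 : θ/M ≤ halfReturn m c k θ τ u := by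
      rw [div_le_iff₀ hM]; linarith
    have h5 : halfReturn m c k θ τ u - u
        ≥ halfReturn m c k θ τ u * (1 + hhf m c k (-τ ![θ,vstar - ε])) := by
      nlinarith
    have h6 : halfReturn m c k θ τ u * (1 + hhf m c k (-τ ![θ,vstar - ε]))
        ≥ (θ/M) * (1 + hhf m c k (-τ ![θ,vstar - ε])) := by
      nlinarith
    have h7 : (1 + hhf m c k (-τ ![θ,vstar - ε])) * θ / M
        = (θ/M) * (1 + hhf m c k (-τ ![θ,vstar - ε])) := by ring
    linarith [h5, h6, h7.le, h7.ge]
  -- final convergence argument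
  intro v hv0
  rcases lt_trichotomy v vstar with hcase | hcase | hcase
  · -- `v < vstar` : the iterates increase towards `vstar`
    have iter_mem : ∀ n : ℕ, 0 < (halfReturn m c k θ τ)^[n] v ∧
        (halfReturn m c k θ τ)^[n] v < vstar := by
      intro n
      induction n with
      | zero => exact ⟨hv0, hcase⟩
      | succ n ih =>
        rw [Function.iterate_succ_apply']
        obtain ⟨ih1, ih2⟩ := ih
        obtain ⟨l1, l2, _⟩ := lower _ ih1 ih2
        exact ⟨lt_trans ih1 l1, l2⟩
    rw [Metric.tendsto_atTop]
    intro ε hε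
    set ε' := min (ε/2) (vstar/2) with hε'def
    have hε'pos : 0 < ε' := lt_min (by linarith) (by linarith)
    have hε'v : ε' < vstar := lt_of_le_of_lt (min_le_right _ _) (by linarith)
    have hε'ε : ε' < ε := lt_of_le_of_lt (min_le_left _ _) (by linarith)
    obtain ⟨d, hd, hstep⟩ := stepL ε' hε'pos hε'v
    have hex : ∃ N : ℕ, vstar - ε' < (halfReturn m c k θ τ)^[N] v := by
      by_contra hcon
      push_neg at hcon
      have hdesc : ∀ n : ℕ, v + n * d ≤ (halfReturn m c k θ τ)^[n] v := by
        intro n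
        induction n with
        | zero => simp
        | succ n ih =>
          rw [Function.iterate_succ_apply']
          have hs := hstep _ (iter_mem n).1 (hcon n)
          push_cast
          linarith
      obtain ⟨n, hn⟩ := exists_nat_gt ((vstar - v) / d)
      have h8 := hdesc n
      have h9 : (vstar - v) / d < (n:ℝ) := hn
      rw [div_lt_iff₀ hd] at h9
      linarith [(iter_mem n).2]
    obtain ⟨N, hN⟩ := hex
    refine ⟨N, fun n hn => ?_⟩
    have hpersist : ∀ j : ℕ, vstar - ε' < (halfReturn m c k θ τ)^[N + j] v := by
      intro j
      induction j with
      | zero => simpa using hN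
      | succ j ih =>
        have : N + (j+1) = (N + j) + 1 := by ring
        rw [this, Function.iterate_succ_apply']
        obtain ⟨m1, m2⟩ := iter_mem (N + j)
        obtain ⟨l1, _, _⟩ := lower _ m1 m2
        linarith
    obtain ⟨j, rfl⟩ := Nat.exists_eq_add_of_le hn
    have hlow := hpersist j
    have hhigh := (iter_mem (N + j)).2
    rw [Real.dist_eq, abs_lt]
    constructor <;> linarith
  · -- `v = vstar`
    have : ∀ n : ℕ, (halfReturn m c k θ τ)^[n] v = vstar := by
      intro n
      rw [hcase]
      exact Function.iterate_fixed hfix n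
    simp only [this]
    exact tendsto_const_nhds
  · -- `v > vstar` : the iterates decrease towards `vstar`
    have iter_mem : ∀ n : ℕ, vstar < (halfReturn m c k θ τ)^[n] v := by
      intro n
      induction n with
      | zero => exact hcase
      | succ n ih =>
        rw [Function.iterate_succ_apply']
        exact (upper _ ih).1
    rw [Metric.tendsto_atTop]
    intro ε hε
    obtain ⟨d, hd, hstep⟩ := stepU (ε/2) (by linarith)
    have hex : ∃ N : ℕ, (halfReturn m c k θ τ)^[N] v < vstar + ε/2 := by
      by_contra hcon
      push_neg at hcon
      have hdesc : ∀ n : ℕ, (halfReturn m c k θ τ)^[n] v ≤ v - n * d := by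
        intro n
        induction n with
        | zero => simp
        | succ n ih =>
          rw [Function.iterate_succ_apply']
          have hs := hstep _ (hcon n)
          push_cast
          linarith
      obtain ⟨n, hn⟩ := exists_nat_gt ((v - vstar) / d)
      have h8 := hdesc n
      have h9 : (v - vstar) / d < (n:ℝ) := hn
      rw [div_lt_iff₀ hd] at h9
      linarith [iter_mem n]
    obtain ⟨N, hN⟩ := hex
    refine ⟨N, fun n hn => ?_⟩
    have hpersist : ∀ j : ℕ, (halfReturn m c k θ τ)^[N + j] v < vstar + ε/2 := by
      intro j
      induction j with
      | zero => simpa using hN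
      | succ j ih =>
        have : N + (j+1) = (N + j) + 1 := by ring
        rw [this, Function.iterate_succ_apply']
        obtain ⟨_, u2, _⟩ := upper _ (iter_mem (N + j))
        linarith
    obtain ⟨j, rfl⟩ := Nat.exists_eq_add_of_le hn
    have hlow := iter_mem (N + j)
    have hhigh := hpersist j
    rw [Real.dist_eq, abs_lt]
    constructor <;> linarith
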